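/- Let A be a unital C*-algebra, B a unital C*-subalgebra containing the unit, E : A → B a conditional expectation, and y ∈ A selfadjoint. For every w ∈ B with Im w strictly positive, both h_y(w) and h_y(−w^{-1}) are well defined (all required inverses exist), and Im h_y(w) ≥ 0 and Im h_y(−w^{-1}) ≥ 0. (Remark 2.4 of the paper.) -/

import Mathlib

noncomputable section

/-- The imaginary part `Im a = (a - a*)/(2i)` of an element of a complex star algebra. -/
def aIm {A : Type*} [NonUnitalRing A] [StarRing A] [Module ℂ A] (a : A) : A :=
  ((2 * Complex.I)⁻¹ : ℂ) • (a - star a)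

/-- `k > 0`: `k` is selfadjoint, nonnegative and invertible. -/
def StrictlyPos {A : Type*} [Ring A] [StarRing A] [PartialOrder A] (k : A) : Prop :=
  IsSelfAdjoint k ∧ 0 ≤ k ∧ IsUnit k

/-- The h transform `h_y(v) = v⁻¹ - E[(v⁻¹ - y)⁻¹]⁻¹`. -/
def hT {A : Type*} [Ring A] [Module ℂ A] (E : A →ₗ[ℂ] A) (y v : A) : A :=
  Ring.inverse v - Ring.inverse (E (Ring.inverse (Ring.inverse v - y)))

/-!
Call `a` *upper* if `Im a` is strictly positive. Upper elements are invertible, since for `r = r*`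
and `k > 0` both `(r + i k) k⁻¹ (r - i k)` and `(r - i k) k⁻¹ (r + i k)` equal `r k⁻¹ r + k > 0`.
The maps `a ↦ -a⁻¹` and `a ↦ a + y` (`y = y*`) preserve upper elements, and so does `E`, which
commutes with `Im` and sends strictly positive elements to strictly positive ones. Hence for upper
`w`, `g = (w⁻¹ - y)⁻¹` and `E g` are upper, and `h_y(w)` is well defined. With `m = Im(-w⁻¹) ∈ B`
we have `Im g = g m g*`, and the Kadison–Schwarz type inequality `E g · m · (E g)* ≤ E (g m g*)`,
conjugated by `(E g)⁻¹`, gives `m ≤ Im(-(E g)⁻¹)`, i.e. `Im h_y(w) ≥ 0`. Finally `-w⁻¹` is again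
an upper element of `B`.
-/

open ComplexStarModule Complex
open scoped Ring

lemma strictlyPos_iff_isStrictlyPositive {A : Type*} [Ring A] [StarRing A] [PartialOrder A]
    [StarOrderedRing A] {k : A} : StrictlyPos k ↔ IsStrictlyPositive k :=
  ⟨fun h ↦ h.2.2.isStrictlyPositive h.2.1, fun h ↦ ⟨h.isSelfAdjoint, h.nonneg, h.isUnit⟩⟩

section aIm

variable {A : Type*} [NonUnitalRing A] [StarRing A] [Module ℂ A]

lemma aIm_of_isSelfAdjoint {a : A} (ha : IsSelfAdjoint a) : aIm a = 0 := by
  rw [aIm, ha.star_eq, sub_self, smul_zero]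

variable [StarModule ℂ A]

lemma aIm_eq_imaginaryPart (a : A) : aIm a = ℑ a := by
  rw [aIm, imaginaryPart_apply_coe, ← Complex.coe_smul, smul_smul]
  congr 1
  field_simp
  simp

lemma aIm_sub (a b : A) : aIm (a - b) = aIm a - aIm b := by
  simp [aIm_eq_imaginaryPart]

lemma aIm_neg (a : A) : aIm (-a) = -aIm a := by
  simp [aIm_eq_imaginaryPart]

end aIm

section Ring

variable {A : Type*} [Ring A] [Algebra ℂ A]

lemma add_I_smul_mul_mul_sub_I_smul {r k k' : A} (h₁ : k * k' = 1) (h₂ : k' * k = 1) :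
    (r + I • k) * k' * (r - I • k) = r * k' * r + k := by
  rw [add_mul, smul_mul_assoc, h₁]
  simp only [add_mul, mul_sub, smul_mul_assoc, mul_smul_comm, one_mul, mul_assoc, h₂, mul_one]
  match_scalars <;> simp

lemma sub_I_smul_mul_mul_add_I_smul {r k k' : A} (h₁ : k * k' = 1) (h₂ : k' * k = 1) :
    (r - I • k) * k' * (r + I • k) = r * k' * r + k := by
  rw [sub_mul, smul_mul_assoc, h₁]
  simp only [sub_mul, mul_add, smul_mul_assoc, mul_smul_comm, one_mul, mul_assoc, h₂, mul_one]
  match_scalars <;> simp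

variable [StarRing A]

lemma aIm_ringInverse {a : A} (ha : IsUnit a) : aIm a⁻¹ʳ = -(a⁻¹ʳ * aIm a * star a⁻¹ʳ) := by
  have key : a⁻¹ʳ - star a⁻¹ʳ = -(a⁻¹ʳ * (a - star a) * star a⁻¹ʳ) := by
    rw [mul_sub, sub_mul, Ring.inverse_mul_cancel _ ha, one_mul, mul_assoc, ← star_mul,
      Ring.inverse_mul_cancel _ ha, star_one, mul_one, neg_sub]
  rw [aIm, aIm, key, smul_neg, mul_smul_comm, smul_mul_assoc]

variable [StarModule ℂ A]

lemma aIm_mem {S : StarSubalgebra ℂ A} {a : A} (ha : a ∈ S) : aIm a ∈ S :=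
  S.smul_mem (sub_mem ha (star_mem ha)) _

lemma aIm_neg_ringInverse {a : A} (ha : IsUnit a) : aIm (-a⁻¹ʳ) = a⁻¹ʳ * aIm a * star a⁻¹ʳ := by
  rw [aIm_neg, aIm_ringInverse ha, neg_neg]

variable [PartialOrder A] [StarOrderedRing A]

lemma le_aIm_neg_ringInverse {c m : A} (hc : IsUnit c) (h : c * m * star c ≤ aIm c) :
    m ≤ aIm (-c⁻¹ʳ) := by
  have hm : c⁻¹ʳ * (c * m * star c) * star c⁻¹ʳ = m := by
    rw [← mul_assoc, ← mul_assoc, Ring.inverse_mul_cancel _ hc, one_mul, mul_assoc, ← star_mul,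
      Ring.inverse_mul_cancel _ hc, star_one, mul_one]
  rw [aIm_neg_ringInverse hc, ← hm]
  exact star_right_conjugate_le_conjugate h _

end Ring

section CStarAlgebra

variable {A : Type*} [CStarAlgebra A] [PartialOrder A] [StarOrderedRing A]

lemma isUnit_add_I_smul {r k : A} (hr : IsSelfAdjoint r) (hk : IsStrictlyPositive k) :
    IsUnit (r + I • k) := by
  have hk₁ : k * k⁻¹ʳ = 1 := Ring.mul_inverse_cancel _ hk.isUnit
  have hk₂ : k⁻¹ʳ * k = 1 := Ring.inverse_mul_cancel _ hk.isUnit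
  have hp : IsStrictlyPositive (r * k⁻¹ʳ * r + k) :=
    IsStrictlyPositive.nonneg_add (hr.conjugate_nonneg hk.ringInverse.nonneg) hk
  have hpu := hp.isUnit
  rw [isUnit_iff_exists_and_exists]
  refine ⟨⟨k⁻¹ʳ * (r - I • k) * (r * k⁻¹ʳ * r + k)⁻¹ʳ, ?_⟩,
    ⟨(r * k⁻¹ʳ * r + k)⁻¹ʳ * ((r - I • k) * k⁻¹ʳ), ?_⟩⟩
  · rw [← mul_assoc, ← mul_assoc, add_I_smul_mul_mul_sub_I_smul hk₁ hk₂,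
      Ring.mul_inverse_cancel _ hpu]
  · rw [mul_assoc, sub_I_smul_mul_mul_add_I_smul hk₁ hk₂,
      Ring.inverse_mul_cancel _ hpu]

lemma isUnit_of_isStrictlyPositive_aIm {a : A} (h : IsStrictlyPositive (aIm a)) : IsUnit a := by
  have := isUnit_add_I_smul (ℜ a).2 (aIm_eq_imaginaryPart a ▸ h)
  rwa [realPart_add_I_smul_imaginaryPart] at this

lemma isStrictlyPositive_aIm_neg_ringInverse {a : A} (h : IsStrictlyPositive (aIm a)) :
    IsStrictlyPositive (aIm (-a⁻¹ʳ)) := by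
  have ha := isUnit_of_isStrictlyPositive_aIm h
  rwa [aIm_neg_ringInverse ha, ha.ringInverse.isStrictlyPositive_star_right_conjugate_iff]

end CStarAlgebra

lemma StarSubalgebra.ringInverse_mem {A : Type*} [CStarAlgebra A] (S : StarSubalgebra ℂ A)
    [IsClosed (S : Set A)] {x : A} (hx : x ∈ S) : x⁻¹ʳ ∈ S := by
  by_cases hu : IsUnit x
  · obtain ⟨u, hux⟩ := (S.coe_isUnit (a := ⟨x, hx⟩)).mp hu
    have hx' : x = (Units.map S.subtype.toMonoidHom u : A) := by simp [hux]
    rw [hx', Ring.inverse_unit]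
    simp
  · rw [Ring.inverse_non_unit _ hu]
    exact zero_mem S

namespace PositiveLinearMap

variable {A₁ A₂ : Type*}

lemma map_star [NonUnitalCStarAlgebra A₁] [PartialOrder A₁] [StarOrderedRing A₁]
    [NonUnitalRing A₂] [StarRing A₂] [PartialOrder A₂] [StarOrderedRing A₂] [Module ℂ A₂]
    [StarModule ℂ A₂] (f : A₁ →ₚ[ℂ] A₂) (a : A₁) : f (star a) = star (f a) := by
  have hsa : ∀ x, IsSelfAdjoint x → IsSelfAdjoint (f x) := fun x hx ↦ by
    rw [← CFC.posPart_sub_negPart x hx, map_sub]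
    exact (f.map_nonneg (CFC.posPart_nonneg x)).isSelfAdjoint.sub
      (f.map_nonneg (CFC.negPart_nonneg x)).isSelfAdjoint
  rw [← realPart_add_I_smul_imaginaryPart a]
  simp [(hsa _ (ℜ a).2).star_eq, (hsa _ (ℑ a).2).star_eq, (ℜ a).2.star_eq, (ℑ a).2.star_eq]

lemma isStrictlyPositive_apply [CStarAlgebra A₁] [PartialOrder A₁] [StarOrderedRing A₁]
    [CStarAlgebra A₂] [PartialOrder A₂] [StarOrderedRing A₂] (f : A₁ →ₚ[ℂ] A₂) (hf : f 1 = 1)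
    {a : A₁} (ha : IsStrictlyPositive a) : IsStrictlyPositive (f a) := by
  nontriviality A₂
  have : Nontrivial A₁ := ⟨1, 0, fun h ↦ one_ne_zero (by rw [← hf, h, map_zero])⟩
  obtain ⟨r, hr, hle⟩ := (CFC.exists_pos_algebraMap_le_iff ha.isSelfAdjoint).2
    fun x hx ↦ ha.spectrum_pos hx
  have hfr : f (algebraMap ℝ A₁ r) = algebraMap ℝ A₂ r := by
    simp [Algebra.algebraMap_eq_smul_one, hf]
  exact (isStrictlyPositive_algebraMap hr).of_le (hfr ▸ f.monotone' hle)

end PositiveLinearMap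

section ConditionalExpectation

variable {A : Type*} [CStarAlgebra A] [PartialOrder A]

structure IsConditionalExpectation (B : StarSubalgebra ℂ A) (E : A →ₗ[ℂ] A) : Prop where
  apply_mem : ∀ a, E a ∈ B
  map_one : E 1 = 1
  map_nonneg : ∀ a, 0 ≤ a → 0 ≤ E a
  map_mul_mul : ∀ b₁ ∈ B, ∀ b₂ ∈ B, ∀ a, E (b₁ * a * b₂) = b₁ * E a * b₂

namespace IsConditionalExpectation

variable {B : StarSubalgebra ℂ A} {E : A →ₗ[ℂ] A} (hE : IsConditionalExpectation B E)
include hE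

lemma apply_of_mem {b : A} (hb : b ∈ B) : E b = b := by
  simpa [hE.map_one] using hE.map_mul_mul b hb 1 (one_mem B) 1

variable [StarOrderedRing A]

lemma map_star (a : A) : E (star a) = star (E a) :=
  (PositiveLinearMap.mk₀ E hE.map_nonneg).map_star a

lemma aIm_apply (a : A) : aIm (E a) = E (aIm a) := by
  rw [aIm, aIm, map_smul, map_sub, hE.map_star]

lemma isStrictlyPositive_apply {a : A} (ha : IsStrictlyPositive a) : IsStrictlyPositive (E a) :=
  (PositiveLinearMap.mk₀ E hE.map_nonneg).isStrictlyPositive_apply hE.map_one ha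

/-- A Kadison–Schwarz inequality: expand `0 ≤ E ((g - E g) * m * star (g - E g))`. -/
lemma mul_mul_star_le {m : A} (hmB : m ∈ B) (hm : 0 ≤ m) (g : A) :
    E g * m * star (E g) ≤ E (g * m * star g) := by
  have hc := hE.apply_mem g
  have h₀ := hE.map_nonneg _ (star_right_conjugate_nonneg hm (g - E g))
  have h₁ : E (g * (m * star (E g))) = E g * m * star (E g) := by
    simpa [mul_assoc] using hE.map_mul_mul 1 (one_mem B) _ (mul_mem hmB (star_mem hc)) g
  have h₂ : E (E g * m * star g) = E g * m * star (E g) := by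
    simpa [hE.map_star] using hE.map_mul_mul _ (mul_mem hc hmB) 1 (one_mem B) (star g)
  have h₃ : E (E g * m * star (E g)) = E g * m * star (E g) :=
    hE.apply_of_mem (mul_mem (mul_mem hc hmB) (star_mem hc))
  have hexp : (g - E g) * m * star (g - E g)
      = g * m * star g - g * (m * star (E g)) - E g * m * star g + E g * m * star (E g) := by
    rw [star_sub]; noncomm_ring
  rw [hexp, map_add, map_sub, map_sub, h₁, h₂, h₃] at h₀
  rw [← sub_nonneg]
  convert h₀ using 1
  abel

lemma hT_defined_and_aIm_hT_nonneg [IsClosed (B : Set A)] {y w : A} (hy : IsSelfAdjoint y)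
    (hwB : w ∈ B) (hw : IsStrictlyPositive (aIm w)) :
    IsUnit w ∧ IsUnit (w⁻¹ʳ - y) ∧ IsUnit (E (w⁻¹ʳ - y)⁻¹ʳ) ∧ 0 ≤ aIm (hT E y w) := by
  have hwu := isUnit_of_isStrictlyPositive_aIm hw
  have hm : IsStrictlyPositive (w⁻¹ʳ * aIm w * star w⁻¹ʳ) :=
    aIm_neg_ringInverse hwu ▸ isStrictlyPositive_aIm_neg_ringInverse hw
  set m := w⁻¹ʳ * aIm w * star w⁻¹ʳ
  have hmB : m ∈ B := by
    have := B.ringInverse_mem hwB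
    exact mul_mem (mul_mem this (aIm_mem hwB)) (star_mem this)
  have hz : aIm (w⁻¹ʳ - y) = -m := by
    rw [aIm_sub, aIm_of_isSelfAdjoint hy, sub_zero, aIm_ringInverse hwu]
  have hzu : IsUnit (w⁻¹ʳ - y) := by
    refine (IsUnit.neg_iff _).mp (isUnit_of_isStrictlyPositive_aIm ?_)
    rwa [aIm_neg, hz, neg_neg]
  set g := (w⁻¹ʳ - y)⁻¹ʳ
  have hg : aIm g = g * m * star g := by
    rw [aIm_ringInverse hzu, hz, mul_neg, neg_mul, neg_neg]
  have hc : IsStrictlyPositive (aIm (E g)) := by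
    rw [hE.aIm_apply, hg]
    exact hE.isStrictlyPositive_apply
      (hzu.ringInverse.isStrictlyPositive_star_right_conjugate_iff.mpr hm)
  have hcu := isUnit_of_isStrictlyPositive_aIm hc
  have hschwarz : E g * m * star (E g) ≤ aIm (E g) := by
    rw [hE.aIm_apply, hg]
    exact hE.mul_mul_star_le hmB hm.nonneg g
  refine ⟨hwu, hzu, hcu, ?_⟩
  rw [hT, ← neg_sub_neg, aIm_sub, aIm_neg_ringInverse hwu, sub_nonneg]
  exact le_aIm_neg_ringInverse hcu hschwarz

end IsConditionalExpectation

end ConditionalExpectation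

/-- Remark 2.4: for a conditional expectation `E` onto a C*-subalgebra `B`, `y = y*`
and `w ∈ B` with `Im w > 0`, both `h_y(w)` and `h_y(-w⁻¹)` are well defined, and
`Im h_y(w) ≥ 0` and `Im h_y(-w⁻¹) ≥ 0`. -/
theorem stmt_5 {A : Type*} [CStarAlgebra A] [PartialOrder A] [StarOrderedRing A]
    (B : StarSubalgebra ℂ A) (hBclosed : IsClosed (B : Set A))
    (E : A →ₗ[ℂ] A) (hErange : ∀ a : A, E a ∈ B)
    (hE1 : E 1 = 1) (hEpos : ∀ a : A, 0 ≤ a → 0 ≤ E a)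
    (hEbimod : ∀ b₁ ∈ B, ∀ b₂ ∈ B, ∀ a : A, E (b₁ * a * b₂) = b₁ * E a * b₂)
    (y : A) (hy : IsSelfAdjoint y)
    (w : A) (hwB : w ∈ B) (hw : StrictlyPos (aIm w)) :
    (IsUnit w ∧ IsUnit (Ring.inverse w - y) ∧
      IsUnit (E (Ring.inverse (Ring.inverse w - y))) ∧
      0 ≤ aIm (hT E y w)) ∧
    (IsUnit (-(Ring.inverse w)) ∧ IsUnit (Ring.inverse (-(Ring.inverse w)) - y) ∧
      IsUnit (E (Ring.inverse (Ring.inverse (-(Ring.inverse w)) - y))) ∧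
      0 ≤ aIm (hT E y (-(Ring.inverse w)))) := by
  have hE : IsConditionalExpectation B E := ⟨hErange, hE1, hEpos, hEbimod⟩
  have := hBclosed
  rw [strictlyPos_iff_isStrictlyPositive] at hw
  exact ⟨hE.hT_defined_and_aIm_hT_nonneg hy hwB hw,
    hE.hT_defined_and_aIm_hT_nonneg hy (neg_mem (B.ringInverse_mem hwB))
      (isStrictlyPositive_aIm_neg_ringInverse hw)⟩
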